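/- arXiv:2602.08164 — 3 statements merged into one kernel-verified Lean document; each statement's English description precedes it below -/
import Mathlib

section
/- For all real numbers x, y > 0, the scalar trace-log divergence satisfies the integral representation: log((x+y)/2) - (1/2)log x - (1/2)log y = (1/2) ∫₀^∞ (e^{-rx/2} - e^{-ry/2})² / r dr. -/
open MeasureTheory Set

lemma frullani_nonneg {a b : ℝ} (hab : a ≤ b) {s : ℝ} (hs : 0 < s) :
    0 ≤ (Real.exp (-(a * s)) - Real.exp (-(b * s))) / s := by
  apply div_nonneg _ hs.le
  have : Real.exp (-(b * s)) ≤ Real.exp (-(a * s)) := by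
    apply Real.exp_le_exp.2; nlinarith
  linarith

lemma frullani_bound {a b : ℝ} (hab : a ≤ b) {s : ℝ} (hs : 0 < s) :
    (Real.exp (-(a * s)) - Real.exp (-(b * s))) / s ≤ (b - a) * Real.exp (-(a * s)) := by
  rw [div_le_iff₀ hs]
  have h1 : Real.exp (-(b * s)) = Real.exp (-(a * s)) * Real.exp (-((b - a) * s)) := by
    rw [← Real.exp_add]; ring_nf
  have h2 : 1 - (b - a) * s ≤ Real.exp (-((b - a) * s)) := by
    have := Real.add_one_le_exp (-((b - a) * s)); linarith
  nlinarith [Real.exp_pos (-(a * s))]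

lemma frullani_integrable {a b : ℝ} (ha : 0 < a) (hab : a ≤ b) :
    IntegrableOn (fun s => (Real.exp (-(a * s)) - Real.exp (-(b * s))) / s) (Ioi 0) := by
  have hdom : IntegrableOn (fun s => (b - a) * Real.exp (-a * s)) (Ioi 0) :=
    (exp_neg_integrableOn_Ioi 0 ha).const_mul _
  refine Integrable.mono hdom ?_ ?_
  · apply ContinuousOn.aestronglyMeasurable _ measurableSet_Ioi
    apply ContinuousOn.div (by fun_prop) continuousOn_id
    intro s hs; exact ne_of_gt hs
  · filter_upwards [ae_restrict_mem measurableSet_Ioi] with s hs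
    rw [Real.norm_of_nonneg (frullani_nonneg hab hs), Real.norm_of_nonneg]
    · rw [neg_mul]; exact frullani_bound hab hs
    · exact mul_nonneg (by linarith) (Real.exp_pos _).le

lemma frullani {a b : ℝ} (ha : 0 < a) (hab : a ≤ b) :
    ∫ s in Ioi (0 : ℝ), (Real.exp (-(a * s)) - Real.exp (-(b * s))) / s
      = Real.log b - Real.log a := by
  have hb : 0 < b := ha.trans_le hab
  -- the two-variable function
  set f : ℝ → ℝ → ℝ := fun s t => Real.exp (-(t * s)) with hf
  have hcont : Continuous (Function.uncurry f) := by
    apply Real.continuous_exp.comp; fun_prop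
  have hmeas : AEStronglyMeasurable (Function.uncurry f)
      ((volume.restrict (Ioi 0)).prod (volume.restrict (Ioc a b))) :=
    hcont.aestronglyMeasurable
  -- inner integral in t
  have inner1 : ∀ s : ℝ, 0 < s →
      ∫ t in Ioc a b, Real.exp (-(t * s)) = (Real.exp (-(a * s)) - Real.exp (-(b * s))) / s := by
    intro s hs
    rw [← intervalIntegral.integral_of_le hab]
    have hderiv : ∀ t ∈ uIcc a b, HasDerivAt (fun u => -Real.exp (-(u * s)) / s)
        (Real.exp (-(t * s))) t := by
      intro t _
      have h1 : HasDerivAt (fun u : ℝ => -(u * s)) (-s) t := by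
        exact (hasDerivAt_mul_const s).neg
      have h2 := (Real.hasDerivAt_exp (-(t * s))).comp t h1
      have h3 := (h2.neg).div_const s
      have e : -(Real.exp (-(t * s)) * -s) / s = Real.exp (-(t * s)) := by
        rw [div_eq_iff hs.ne']; ring
      rw [e] at h3
      exact h3
    rw [intervalIntegral.integral_eq_sub_of_hasDerivAt hderiv]
    · ring
    · exact (Real.continuous_exp.comp (by fun_prop)).intervalIntegrable a b
  -- inner integral in s
  have inner2 : ∀ t : ℝ, 0 < t → ∫ s in Ioi (0 : ℝ), Real.exp (-(t * s)) = t⁻¹ := by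
    intro t ht
    have := integral_comp_mul_left_Ioi (fun u => Real.exp (-u)) 0 ht
    simp only [mul_zero, integral_exp_neg_Ioi_zero, smul_eq_mul, mul_one] at this
    exact this
  -- integrability on the product
  have hprod : Integrable (Function.uncurry f)
      ((volume.restrict (Ioi 0)).prod (volume.restrict (Ioc a b))) := by
    rw [integrable_prod_iff hmeas]
    constructor
    · refine ae_of_all _ fun s => ?_
      exact (hcont.comp (Continuous.prodMk_right s)).integrableOn_Ioc
    · have hdom : IntegrableOn (fun s => (b - a) * Real.exp (-a * s)) (Ioi 0) :=
        (exp_neg_integrableOn_Ioi 0 ha).const_mul _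
      refine Integrable.mono hdom (hmeas.norm.integral_prod_right') ?_
      filter_upwards [ae_restrict_mem measurableSet_Ioi] with s hs
      simp only [Function.uncurry_apply_pair]
      have hnn : 0 ≤ ∫ t in Ioc a b, ‖f s t‖ :=
        integral_nonneg fun t => norm_nonneg _
      rw [Real.norm_of_nonneg hnn, Real.norm_of_nonneg
        (mul_nonneg (by linarith) (Real.exp_pos _).le)]
      have hle : ∫ t in Ioc a b, ‖f s t‖ ≤ ∫ t in Ioc a b, Real.exp (-(a * s)) := by
        apply setIntegral_mono_on
        · exact ((hcont.comp (Continuous.prodMk_right s)).integrableOn_Ioc).norm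
        · exact integrableOn_const measure_Ioc_lt_top.ne
        · exact measurableSet_Ioc
        · intro t ht
          rw [Real.norm_of_nonneg (Real.exp_pos _).le]
          apply Real.exp_le_exp.2
          nlinarith [ht.1, mem_Ioi.1 hs]
      calc ∫ t in Ioc a b, ‖f s t‖ ≤ ∫ t in Ioc a b, Real.exp (-(a * s)) := hle
        _ = (b - a) * Real.exp (-a * s) := by
            rw [setIntegral_const, Real.volume_real_Ioc_of_le hab, smul_eq_mul,
              neg_mul]
  -- Fubini
  have swap := integral_integral_swap hprod
  calc ∫ s in Ioi (0 : ℝ), (Real.exp (-(a * s)) - Real.exp (-(b * s))) / s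
      = ∫ s in Ioi (0 : ℝ), ∫ t in Ioc a b, f s t := by
        apply setIntegral_congr_fun measurableSet_Ioi
        intro s hs
        exact (inner1 s hs).symm
    _ = ∫ t in Ioc a b, ∫ s in Ioi (0 : ℝ), f s t := swap
    _ = ∫ t in Ioc a b, t⁻¹ := by
        apply setIntegral_congr_fun measurableSet_Ioc
        intro t ht
        exact inner2 t (ha.trans ht.1)
    _ = Real.log b - Real.log a := by
        rw [← intervalIntegral.integral_of_le hab, integral_inv
          (by rw [uIcc_of_le hab]; intro h; exact absurd h.1 (not_le.2 ha)),
          Real.log_div hb.ne' ha.ne']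

lemma main_aux (x y : ℝ) (hx : 0 < x) (hy : 0 < y) (hxy : x ≤ y) :
    Real.log ((x + y) / 2) - (1 / 2) * Real.log x - (1 / 2) * Real.log y
      = (1 / 2) * ∫ r in Set.Ioi (0 : ℝ),
          (Real.exp (-(r * x) / 2) - Real.exp (-(r * y) / 2)) ^ 2 / r := by
  set c : ℝ := (x + y) / 2 with hc
  have hxc : x ≤ c := by rw [hc]; linarith
  have hcy : c ≤ y := by rw [hc]; linarith
  have hcpos : 0 < c := by rw [hc]; linarith
  have key : ∀ r : ℝ, (Real.exp (-(r * x) / 2) - Real.exp (-(r * y) / 2)) ^ 2 / r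
      = (Real.exp (-(x * r)) - Real.exp (-(c * r))) / r
        - (Real.exp (-(c * r)) - Real.exp (-(y * r))) / r := by
    intro r
    rw [← sub_div]
    congr 1
    have h2 : ∀ u : ℝ, Real.exp u ^ 2 = Real.exp (2 * u) := fun u => by
      rw [two_mul, Real.exp_add, sq]
    rw [sub_sq, h2, h2, mul_assoc, ← Real.exp_add]
    have e1 : 2 * (-(r * x) / 2) = -(x * r) := by ring
    have e2 : 2 * (-(r * y) / 2) = -(y * r) := by ring
    have e3 : -(r * x) / 2 + -(r * y) / 2 = -(c * r) := by rw [hc]; ring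
    rw [e1, e2, e3]
    ring
  simp only [key]
  rw [integral_sub (frullani_integrable hx hxc) (frullani_integrable hcpos hcy),
    frullani hx hxc, frullani hcpos hcy]
  ring

theorem scalar_tracelog_integral_repr (x y : ℝ) (hx : 0 < x) (hy : 0 < y) :
    Real.log ((x + y) / 2) - (1 / 2) * Real.log x - (1 / 2) * Real.log y
      = (1 / 2) * ∫ r in Set.Ioi (0 : ℝ),
          (Real.exp (-(r * x) / 2) - Real.exp (-(r * y) / 2)) ^ 2 / r := by
  rcases le_total x y with h | h
  · exact main_aux x y hx hy h
  · have := main_aux y x hy hx h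
    have hint : (∫ r in Set.Ioi (0 : ℝ),
        (Real.exp (-(r * y) / 2) - Real.exp (-(r * x) / 2)) ^ 2 / r)
        = ∫ r in Set.Ioi (0 : ℝ),
        (Real.exp (-(r * x) / 2) - Real.exp (-(r * y) / 2)) ^ 2 / r := by
      congr 1 with r
      ring
    rw [hint] at this
    rw [add_comm y x] at this
    linarith
end

section
/- The function δ_s(x,y) := sqrt(log((x+y)/2) - (1/2)log x - (1/2)log y) defines a metric on (0,∞): it is nonnegative, symmetric, vanishes exactly when x = y, and satisfies the triangle inequality. -/
noncomputable def deltaS (x y : ℝ) : ℝ :=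
  Real.sqrt (Real.log ((x + y) / 2) - (1 / 2) * Real.log x - (1 / 2) * Real.log y)

open Real

namespace DeltaSAux

lemma hasDerivAt_phi (u : ℝ) :
    HasDerivAt (fun u => 2 * Real.log (Real.cosh u) - (Real.sinh u / Real.cosh u) ^ 2)
      (2 * (Real.sinh u / Real.cosh u) -
        2 * (Real.sinh u / Real.cosh u) * (1 / Real.cosh u ^ 2)) u := by
  have hc : Real.cosh u ≠ 0 := (Real.cosh_pos u).ne'
  have h1 : HasDerivAt (fun u => Real.log (Real.cosh u)) (Real.sinh u / Real.cosh u) u := by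
    simpa using (Real.hasDerivAt_cosh u).log hc
  have h2 : HasDerivAt (fun u => Real.sinh u / Real.cosh u)
      ((Real.cosh u * Real.cosh u - Real.sinh u * Real.sinh u) / Real.cosh u ^ 2) u :=
    (Real.hasDerivAt_sinh u).div (Real.hasDerivAt_cosh u) hc
  have h2' : HasDerivAt (fun u => Real.sinh u / Real.cosh u) (1 / Real.cosh u ^ 2) u := by
    convert h2 using 1
    have : Real.cosh u * Real.cosh u - Real.sinh u * Real.sinh u = 1 := by
      have := Real.cosh_sq_sub_sinh_sq u; nlinarith
    rw [this]
  have h3 : HasDerivAt (fun u => (Real.sinh u / Real.cosh u) ^ 2)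
      (2 * (Real.sinh u / Real.cosh u) * (1 / Real.cosh u ^ 2)) u := by
    have := h2'.pow 2
    exact this.congr_deriv (by norm_num)
  exact (h1.const_mul 2).sub h3

lemma key_ineq (u : ℝ) (hu : 0 ≤ u) :
    (Real.sinh u / Real.cosh u) ^ 2 ≤ 2 * Real.log (Real.cosh u) := by
  set φ : ℝ → ℝ := fun u => 2 * Real.log (Real.cosh u) - (Real.sinh u / Real.cosh u) ^ 2
  have hmono : MonotoneOn φ (Set.Ici (0 : ℝ)) := by
    apply monotoneOn_of_deriv_nonneg (convex_Ici 0)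
    · exact Continuous.continuousOn (by
        fun_prop (disch := exact fun x => (Real.cosh_pos x).ne'))
    · intro x hx
      exact ((hasDerivAt_phi x).differentiableAt).differentiableWithinAt
    · intro x hx
      rw [(hasDerivAt_phi x).deriv]
      have hx0 : 0 < x := by simpa using hx
      have hs : 0 ≤ Real.sinh x := Real.sinh_nonneg_iff.mpr hx0.le
      have hc1 : 1 ≤ Real.cosh x := Real.one_le_cosh x
      have hc : 0 < Real.cosh x := Real.cosh_pos x
      have ht : 0 ≤ Real.sinh x / Real.cosh x := div_nonneg hs hc.le
      have h1 : 1 / Real.cosh x ^ 2 ≤ 1 := by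
        rw [div_le_one (by positivity)]; nlinarith
      nlinarith [mul_le_mul_of_nonneg_left h1 ht]
  have h0 : φ 0 = 0 := by simp [φ]
  have := hmono (Set.self_mem_Ici) (Set.mem_Ici.mpr hu) hu
  rw [h0] at this
  simpa [φ, sub_nonneg] using this

lemma log_cosh_nonneg (u : ℝ) : 0 ≤ Real.log (Real.cosh u) :=
  Real.log_nonneg (Real.one_le_cosh u)

lemma tanh_le (u : ℝ) (hu : 0 ≤ u) :
    Real.sinh u / Real.cosh u ≤ Real.sqrt (2 * Real.log (Real.cosh u)) := by
  have ht : 0 ≤ Real.sinh u / Real.cosh u :=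
    div_nonneg (Real.sinh_nonneg_iff.mpr hu) (Real.cosh_pos u).le
  have := Real.sqrt_le_sqrt (key_ineq u hu)
  rwa [Real.sqrt_sq ht] at this

lemma subadd (s t : ℝ) (hs : 0 ≤ s) (ht : 0 ≤ t) :
    Real.sqrt (Real.log (Real.cosh (s + t))) ≤
      Real.sqrt (Real.log (Real.cosh s)) + Real.sqrt (Real.log (Real.cosh t)) := by
  set Ls := Real.log (Real.cosh s)
  set Lt := Real.log (Real.cosh t)
  have hLs : 0 ≤ Ls := log_cosh_nonneg s
  have hLt : 0 ≤ Lt := log_cosh_nonneg t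
  have hcs : 0 < Real.cosh s := Real.cosh_pos s
  have hct : 0 < Real.cosh t := Real.cosh_pos t
  have hA : 0 < Real.cosh s * Real.cosh t := mul_pos hcs hct
  -- log cosh (s+t) ≤ Ls + Lt + tanh s * tanh t
  have step1 : Real.log (Real.cosh (s + t)) ≤
      Ls + Lt + (Real.sinh s / Real.cosh s) * (Real.sinh t / Real.cosh t) := by
    rw [Real.cosh_add]
    have hB : 0 ≤ Real.sinh s * Real.sinh t :=
      mul_nonneg (Real.sinh_nonneg_iff.mpr hs) (Real.sinh_nonneg_iff.mpr ht)
    have hpos : 0 < Real.cosh s * Real.cosh t + Real.sinh s * Real.sinh t := by linarith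
    have hratio : (Real.cosh s * Real.cosh t + Real.sinh s * Real.sinh t) /
        (Real.cosh s * Real.cosh t) =
        1 + (Real.sinh s / Real.cosh s) * (Real.sinh t / Real.cosh t) := by
      field_simp
    have := Real.log_le_sub_one_of_pos (x := (Real.cosh s * Real.cosh t + Real.sinh s * Real.sinh t) / (Real.cosh s * Real.cosh t)) (by positivity)
    rw [Real.log_div hpos.ne' hA.ne', Real.log_mul hcs.ne' hct.ne'] at this
    rw [hratio] at this
    have hLL : Ls + Lt = Real.log (Real.cosh s) + Real.log (Real.cosh t) := rfl
    linarith
  have step2 : (Real.sinh s / Real.cosh s) * (Real.sinh t / Real.cosh t) ≤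
      2 * (Real.sqrt Ls * Real.sqrt Lt) := by
    have h1 := tanh_le s hs
    have h2 := tanh_le t ht
    have ht1 : 0 ≤ Real.sinh s / Real.cosh s := div_nonneg (Real.sinh_nonneg_iff.mpr hs) hcs.le
    have ht2 : 0 ≤ Real.sinh t / Real.cosh t := div_nonneg (Real.sinh_nonneg_iff.mpr ht) hct.le
    calc (Real.sinh s / Real.cosh s) * (Real.sinh t / Real.cosh t)
        ≤ Real.sqrt (2 * Ls) * Real.sqrt (2 * Lt) :=
          mul_le_mul h1 h2 ht2 (Real.sqrt_nonneg _)
      _ = 2 * (Real.sqrt Ls * Real.sqrt Lt) := by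
          rw [← Real.sqrt_mul (by linarith : (0:ℝ) ≤ 2 * Ls),
            show 2 * Ls * (2 * Lt) = (2:ℝ)^2 * (Ls * Lt) by ring,
            Real.sqrt_mul (by positivity), Real.sqrt_sq (by norm_num : (0:ℝ) ≤ 2),
            Real.sqrt_mul hLs]
  have hfinal : Real.log (Real.cosh (s + t)) ≤
      (Real.sqrt Ls + Real.sqrt Lt) ^ 2 := by
    have e1 : Real.sqrt Ls ^ 2 = Ls := Real.sq_sqrt hLs
    have e2 : Real.sqrt Lt ^ 2 = Lt := Real.sq_sqrt hLt
    nlinarith [step1, step2]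
  calc Real.sqrt (Real.log (Real.cosh (s + t)))
      ≤ Real.sqrt ((Real.sqrt Ls + Real.sqrt Lt) ^ 2) := Real.sqrt_le_sqrt hfinal
    _ = Real.sqrt Ls + Real.sqrt Lt := Real.sqrt_sq (by positivity)

lemma deltaS_eq (x y : ℝ) (hx : 0 < x) (hy : 0 < y) :
    deltaS x y = Real.sqrt (Real.log (Real.cosh ((Real.log x - Real.log y) / 2))) := by
  unfold deltaS
  congr 1
  set a := Real.log x
  set b := Real.log y
  have hprod : (x + y) / 2 = Real.cosh ((a - b) / 2) * Real.exp ((a + b) / 2) := by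
    rw [Real.cosh_eq]
    rw [show x = Real.exp a from (Real.exp_log hx).symm,
        show y = Real.exp b from (Real.exp_log hy).symm]
    rw [div_mul_eq_mul_div, add_mul, ← Real.exp_add, ← Real.exp_add]
    have e1 : (a - b) / 2 + (a + b) / 2 = a := by ring
    have e2 : -((a - b) / 2) + (a + b) / 2 = b := by ring
    rw [e1, e2]
  rw [hprod, Real.log_mul (Real.cosh_pos _).ne' (Real.exp_ne_zero _), Real.log_exp]
  ring

end DeltaSAux

theorem deltaS_is_metric :
    (∀ x y : ℝ, 0 < x → 0 < y → 0 ≤ deltaS x y) ∧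
    (∀ x y : ℝ, 0 < x → 0 < y → deltaS x y = deltaS y x) ∧
    (∀ x y : ℝ, 0 < x → 0 < y → (deltaS x y = 0 ↔ x = y)) ∧
    (∀ x y z : ℝ, 0 < x → 0 < y → 0 < z →
      deltaS x z ≤ deltaS x y + deltaS y z) := by
  refine ⟨fun x y _ _ => Real.sqrt_nonneg _, fun x y _ _ => by
      unfold deltaS; ring_nf, ?_, ?_⟩
  · intro x y hx hy
    rw [DeltaSAux.deltaS_eq x y hx hy]
    set u := (Real.log x - Real.log y) / 2 with hu
    constructor
    · intro h
      have h1 : Real.log (Real.cosh u) ≤ 0 := by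
        by_contra hc
        push_neg at hc
        exact absurd h (by positivity)
      have h2 : Real.cosh u ≤ 1 := by
        by_contra hc
        push_neg at hc
        have := Real.log_pos hc
        linarith
      have h3 : Real.cosh u = 1 := le_antisymm h2 (Real.one_le_cosh u)
      have h4 : u = 0 := by
        by_contra hc
        exact absurd h3 (ne_of_gt (Real.one_lt_cosh.mpr hc))
      have : Real.log x = Real.log y := by
        rw [hu] at h4
        linarith [h4]
      calc x = Real.exp (Real.log x) := (Real.exp_log hx).symm
        _ = Real.exp (Real.log y) := by rw [this]
        _ = y := Real.exp_log hy
    · intro h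
      subst h
      rw [hu]
      simp
  · intro x y z hx hy hz
    rw [DeltaSAux.deltaS_eq x z hx hz, DeltaSAux.deltaS_eq x y hx hy,
      DeltaSAux.deltaS_eq y z hy hz]
    set a := Real.log x
    set b := Real.log y
    set c := Real.log z
    have hre : ∀ p q : ℝ, Real.cosh ((p - q) / 2) = Real.cosh (|p - q| / 2) := by
      intro p q
      rw [show |p - q| / 2 = |(p - q) / 2| by rw [abs_div]; norm_num]
      exact (Real.cosh_abs _).symm
    rw [hre a c, hre a b, hre b c]
    set s := |a - b| / 2 with hsdef
    set t := |b - c| / 2 with htdef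
    have hs : 0 ≤ s := by positivity
    have htt : 0 ≤ t := by positivity
    have habs : |a - c| / 2 ≤ s + t := by
      rw [hsdef, htdef]
      have := abs_sub_le a b c
      linarith
    have hmono : Real.cosh (|a - c| / 2) ≤ Real.cosh (s + t) := by
      rw [Real.cosh_le_cosh]
      rw [abs_of_nonneg (by positivity : (0:ℝ) ≤ |a - c| / 2),
        abs_of_nonneg (by linarith : (0:ℝ) ≤ s + t)]
      exact habs
    have hlog : Real.log (Real.cosh (|a - c| / 2)) ≤ Real.log (Real.cosh (s + t)) :=
      Real.log_le_log (Real.cosh_pos _) hmono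
    calc Real.sqrt (Real.log (Real.cosh (|a - c| / 2)))
        ≤ Real.sqrt (Real.log (Real.cosh (s + t))) := Real.sqrt_le_sqrt hlog
      _ ≤ _ := DeltaSAux.subadd s t hs htt
end

section
/- Let X be a set and K : X × X → ℝ symmetric with K(x,x) = 0. If K is conditionally negative definite (i.e., Σ_{i,j} c_i c_j K(x_i, x_j) ≤ 0 whenever Σ_i c_i = 0), then for every β > 0 the kernel exp(-βK) is positive definite. Conversely, if exp(-βK) is positive definite for all β > 0, then K is conditionally negative definite. -/
open scoped BigOperators

open Finset

lemma gram_pow_nonneg {n : ℕ} (C : Fin n → Fin n → ℝ) (d : Fin n → ℝ) (k : ℕ) :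
    0 ≤ ∑ i, ∑ j, d i * d j * (∑ t, C t i * C t j) ^ k := by
  classical
  set F := Fintype.piFinset (fun _ : Fin k => (univ : Finset (Fin n))) with hF
  have hpow : ∀ i j : Fin n, (∑ t, C t i * C t j) ^ k
      = ∑ f ∈ F, (∏ r, C (f r) i) * (∏ r, C (f r) j) := by
    intro i j
    have h1 : (∑ t, C t i * C t j) ^ k = ∏ _r : Fin k, (∑ t, C t i * C t j) := by
      simp [Finset.prod_const]
    rw [h1, Finset.prod_univ_sum]
    exact Finset.sum_congr rfl fun f _ => Finset.prod_mul_distrib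
  have key : ∑ f ∈ F, (∑ i, d i * ∏ r, C (f r) i) ^ 2
      = ∑ i, ∑ j, ∑ f ∈ F, (d i * ∏ r, C (f r) i) * (d j * ∏ r, C (f r) j) := by
    simp_rw [sq, Finset.sum_mul_sum]
    rw [Finset.sum_comm]
    exact Finset.sum_congr rfl fun i _ => Finset.sum_comm
  calc (0:ℝ) ≤ ∑ f ∈ F, (∑ i, d i * ∏ r, C (f r) i) ^ 2 :=
        Finset.sum_nonneg fun f _ => sq_nonneg _
    _ = ∑ i, ∑ j, ∑ f ∈ F, (d i * ∏ r, C (f r) i) * (d j * ∏ r, C (f r) j) := key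
    _ = ∑ i, ∑ j, d i * d j * (∑ t, C t i * C t j) ^ k := by
        refine Finset.sum_congr rfl fun i _ => Finset.sum_congr rfl fun j _ => ?_
        rw [hpow]
        rw [Finset.mul_sum]
        exact Finset.sum_congr rfl fun f _ => by ring

lemma gram_exp_nonneg {n : ℕ} (C : Fin n → Fin n → ℝ) (d : Fin n → ℝ) :
    0 ≤ ∑ i, ∑ j, d i * d j * Real.exp (∑ t, C t i * C t j) := by
  have hexp : ∀ z : ℝ, Real.exp z = ∑' k : ℕ, z ^ k / (k.factorial) := by
    intro z
    rw [Real.exp_eq_exp_ℝ, NormedSpace.exp_eq_tsum_div]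
  have hsumm : ∀ (a z : ℝ), Summable (fun k : ℕ => a * (z ^ k / (k.factorial))) :=
    fun a z => (Real.summable_pow_div_factorial z).mul_left a
  have hterm : ∀ k : ℕ,
      0 ≤ ∑ i, ∑ j, d i * d j * ((∑ t, C t i * C t j) ^ k / (k.factorial)) := by
    intro k
    have h := gram_pow_nonneg C d k
    have e : ∑ i, ∑ j, d i * d j * ((∑ t, C t i * C t j) ^ k / (k.factorial))
        = (∑ i, ∑ j, d i * d j * (∑ t, C t i * C t j) ^ k) / ((k.factorial) : ℝ) := by
      rw [Finset.sum_div]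
      refine Finset.sum_congr rfl fun i _ => ?_
      rw [Finset.sum_div]
      exact Finset.sum_congr rfl fun j _ => by ring
    rw [e]
    exact div_nonneg h (by positivity)
  calc (0:ℝ) ≤ ∑' k : ℕ, ∑ i, ∑ j, d i * d j * ((∑ t, C t i * C t j) ^ k / (k.factorial)) :=
        tsum_nonneg hterm
    _ = ∑ i, ∑' k : ℕ, ∑ j, d i * d j * ((∑ t, C t i * C t j) ^ k / (k.factorial)) :=
        Summable.tsum_finsetSum (fun i _ => (hasSum_sum (fun j _ => (hsumm _ _).hasSum)).summable)
    _ = ∑ i, ∑ j, ∑' k : ℕ, d i * d j * ((∑ t, C t i * C t j) ^ k / (k.factorial)) :=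
        Finset.sum_congr rfl fun i _ => Summable.tsum_finsetSum fun j _ => hsumm _ _
    _ = ∑ i, ∑ j, d i * d j * Real.exp (∑ t, C t i * C t j) := by
        refine Finset.sum_congr rfl fun i _ => Finset.sum_congr rfl fun j _ => ?_
        rw [tsum_mul_left, ← hexp]

lemma posSemidef_of_quad {n : ℕ} (M : Matrix (Fin n) (Fin n) ℝ)
    (hsym : ∀ i j, M i j = M j i)
    (h : ∀ v : Fin n → ℝ, 0 ≤ ∑ i, ∑ j, v i * v j * M i j) : M.PosSemidef := by
  refine Matrix.PosSemidef.of_dotProduct_mulVec_nonneg ?_ ?_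
  · ext i j
    simpa [Matrix.conjTranspose_apply] using hsym j i
  · intro v
    have e : dotProduct (star v) (M.mulVec v) = ∑ i, ∑ j, v i * v j * M i j := by
      simp only [dotProduct, Matrix.mulVec, star_trivial, Finset.mul_sum]
      exact Finset.sum_congr rfl fun i _ => Finset.sum_congr rfl fun j _ => by
        ring
    rw [e]
    exact h v

lemma exists_gram {n : ℕ} (M : Matrix (Fin n) (Fin n) ℝ) (hM : M.PosSemidef) :
    ∃ C : Fin n → Fin n → ℝ, ∀ i j, M i j = ∑ t, C t i * C t j := by
  obtain ⟨B, hB⟩ : ∃ B : Matrix (Fin n) (Fin n) ℝ, M = B.conjTranspose * B := by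
    open scoped MatrixOrder in
    obtain ⟨X, hX, -, hXM⟩ := CFC.exists_sqrt_of_isSelfAdjoint_of_quasispectrumRestricts
      hM.isHermitian (QuasispectrumRestricts.nnreal_of_nonneg (Matrix.nonneg_iff_posSemidef.mpr hM))
    exact ⟨X, by rw [← hXM]; congr 1; exact hX.star_eq.symm⟩
  refine ⟨fun t i => B t i, fun i j => ?_⟩
  rw [hB]
  simp [Matrix.mul_apply, Matrix.conjTranspose_apply]

/-- Schoenberg's theorem: a symmetric kernel vanishing on the diagonal is
conditionally negative definite iff exp(-βK) is positive definite for all β > 0. -/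
theorem schoenberg_cnd_iff_exp_posdef {X : Type*} (K : X → X → ℝ)
    (hsymm : ∀ x y, K x y = K y x) (hdiag : ∀ x, K x x = 0) :
    (∀ (m : ℕ) (x : Fin m → X) (c : Fin m → ℝ), (∑ i, c i) = 0 →
        ∑ i, ∑ j, c i * c j * K (x i) (x j) ≤ 0)
    ↔ (∀ β : ℝ, 0 < β → ∀ (m : ℕ) (x : Fin m → X) (c : Fin m → ℝ),
        0 ≤ ∑ i, ∑ j, c i * c j * Real.exp (-β * K (x i) (x j))) := by
  constructor
  · intro hcnd β hβ m x c
    cases m with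
    | zero => simp
    | succ n =>
      set p := x 0 with hp
      set G : Matrix (Fin (n+1)) (Fin (n+1)) ℝ :=
        Matrix.of (fun i j => β * (K (x i) p + K (x j) p - K (x i) (x j))) with hG
      have hGsym : ∀ i j, G i j = G j i := by
        intro i j
        simp only [hG, Matrix.of_apply, hsymm (x i) (x j)]
        ring
      have hGquad : ∀ v : Fin (n+1) → ℝ, 0 ≤ ∑ i, ∑ j, v i * v j * G i j := by
        intro v
        set s := ∑ i, v i with hs
        set T := ∑ i, v i * K (x i) p with hT
        set Q := ∑ i, ∑ j, v i * v j * K (x i) (x j) with hQ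
        set y : Fin (n+2) → X := Fin.snoc x p with hy
        set w : Fin (n+2) → ℝ := Fin.snoc v (-s) with hw
        have key : Q - 2 * s * T ≤ 0 := by
          have h0 := hcnd (n + 2) y w ?side
          case side =>
            rw [Fin.sum_univ_castSucc]
            simp [hw, Fin.snoc_castSucc, Fin.snoc_last, hs]
          · rw [Fin.sum_univ_castSucc] at h0
            have e1 : ∀ i : Fin (n+1),
                ∑ j : Fin (n+2), w i.castSucc * w j * K (y i.castSucc) (y j)
                = (∑ j : Fin (n+1), v i * v j * K (x i) (x j)) + v i * (-s) * K (x i) p := by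
              intro i
              rw [Fin.sum_univ_castSucc]
              simp [hw, hy, Fin.snoc_castSucc, Fin.snoc_last]
            have e2 : ∑ j : Fin (n+2), w (Fin.last (n+1)) * w j * K (y (Fin.last (n+1))) (y j)
                = ∑ j : Fin (n+1), (-s) * v j * K p (x j) := by
              rw [Fin.sum_univ_castSucc]
              simp [hw, hy, Fin.snoc_castSucc, Fin.snoc_last, hdiag]
            rw [e2] at h0
            simp only [e1] at h0
            rw [Finset.sum_add_distrib] at h0
            have e3 : ∑ i : Fin (n+1), v i * (-s) * K (x i) p = -s * T := by
              rw [hT, Finset.mul_sum]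
              exact Finset.sum_congr rfl fun i _ => by ring
            have e4 : ∑ j : Fin (n+1), (-s) * v j * K p (x j) = -s * T := by
              rw [hT, Finset.mul_sum]
              exact Finset.sum_congr rfl fun j _ => by rw [hsymm p (x j)]; ring
            rw [e3, e4] at h0
            rw [hQ]
            linarith
        have expand : ∑ i, ∑ j, v i * v j * G i j = β * (2 * s * T - Q) := by
          have e5 : ∀ i : Fin (n+1), ∑ j : Fin (n+1), v i * v j * G i j
              = β * (v i * K (x i) p * s + v i * T
                  - ∑ j, v i * v j * K (x i) (x j)) := by
            intro i
            have e5a : v i * K (x i) p * s + v i * T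
                  - (∑ j, v i * v j * K (x i) (x j))
                = ∑ j, (v i * K (x i) p * v j + v i * (v j * K (x j) p)
                    - v i * v j * K (x i) (x j)) := by
              rw [hs, hT, Finset.mul_sum, Finset.mul_sum, ← Finset.sum_add_distrib,
                ← Finset.sum_sub_distrib]
            rw [e5a, Finset.mul_sum]
            exact Finset.sum_congr rfl fun j _ => by simp only [hG, Matrix.of_apply]; ring
          rw [Finset.sum_congr rfl fun i _ => e5 i, ← Finset.mul_sum]
          congr 1
          rw [Finset.sum_sub_distrib, Finset.sum_add_distrib, ← Finset.sum_mul,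
            ← Finset.sum_mul, ← hs, ← hT, ← hQ]
          ring
        rw [expand]
        have h6 : 0 ≤ 2 * s * T - Q := by linarith
        exact mul_nonneg hβ.le h6
      obtain ⟨C, hC⟩ := exists_gram G (posSemidef_of_quad G hGsym hGquad)
      have hd := gram_exp_nonneg C (fun i => c i * Real.exp (-β * K (x i) p))
      have e6 : ∀ i j : Fin (n+1),
          (c i * Real.exp (-β * K (x i) p)) * (c j * Real.exp (-β * K (x j) p)) *
            Real.exp (∑ t, C t i * C t j)
          = c i * c j * Real.exp (-β * K (x i) (x j)) := by
        intro i j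
        rw [← hC i j]
        have harg : (-β * K (x i) p) + ((-β * K (x j) p) + G i j) = -β * K (x i) (x j) := by
          simp only [hG, Matrix.of_apply]
          ring
        calc (c i * Real.exp (-β * K (x i) p)) * (c j * Real.exp (-β * K (x j) p)) *
              Real.exp (G i j)
            = c i * c j * (Real.exp (-β * K (x i) p) *
                (Real.exp (-β * K (x j) p) * Real.exp (G i j))) := by ring
          _ = c i * c j * Real.exp (-β * K (x i) (x j)) := by
              rw [← Real.exp_add, ← Real.exp_add, harg]
      calc (0:ℝ) ≤ ∑ i, ∑ j, (c i * Real.exp (-β * K (x i) p)) *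
              (c j * Real.exp (-β * K (x j) p)) * Real.exp (∑ t, C t i * C t j) := hd
        _ = ∑ i, ∑ j, c i * c j * Real.exp (-β * K (x i) (x j)) :=
            Finset.sum_congr rfl fun i _ => Finset.sum_congr rfl fun j _ => e6 i j
  · intro hpd m x c hc
    set g : ℝ → ℝ := fun β => ∑ i, ∑ j, c i * c j * Real.exp (-β * K (x i) (x j)) with hg
    have hg0 : g 0 = 0 := by
      have : g 0 = (∑ i, c i) * (∑ j, c j) := by
        rw [hg, Finset.sum_mul_sum]
        simp
      rw [this, hc, zero_mul]
    have hderiv : HasDerivAt g (∑ i, ∑ j, c i * c j * -(K (x i) (x j))) 0 := by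
      apply HasDerivAt.fun_sum
      intro i _
      apply HasDerivAt.fun_sum
      intro j _
      have h1 : HasDerivAt (fun β : ℝ => -β * K (x i) (x j)) (-K (x i) (x j)) 0 := by
        simpa using ((hasDerivAt_id (0:ℝ)).neg.mul_const (K (x i) (x j)))
      have h2 := (Real.hasDerivAt_exp ((-(0:ℝ)) * K (x i) (x j))).comp 0 h1
      have h3 := h2.const_mul (c i * c j)
      simpa [mul_comm, mul_left_comm, mul_assoc] using h3
    have hD : 0 ≤ ∑ i, ∑ j, c i * c j * -(K (x i) (x j)) := by
      have hslope := hasDerivAt_iff_tendsto_slope.mp hderiv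
      have hsub : Set.Ioi (0:ℝ) ⊆ {(0:ℝ)}ᶜ := fun y hy => ne_of_gt hy
      have hslope' := hslope.mono_left (nhdsWithin_mono (0:ℝ) hsub)
      refine ge_of_tendsto hslope' ?_
      filter_upwards [self_mem_nhdsWithin] with β hβ
      have hb : (0:ℝ) < β := hβ
      have : slope g 0 β = g β / β := by
        rw [slope_def_field, hg0, sub_zero, sub_zero]
      rw [this]
      exact div_nonneg (hpd β hb m x c) hb.le
    have e7 : ∑ i, ∑ j, c i * c j * -(K (x i) (x j))
        = -(∑ i, ∑ j, c i * c j * K (x i) (x j)) := by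
      rw [← Finset.sum_neg_distrib]
      refine Finset.sum_congr rfl fun i _ => ?_
      rw [← Finset.sum_neg_distrib]
      exact Finset.sum_congr rfl fun j _ => by ring
    rw [e7] at hD
    linarith
end
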